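/- Let K be a field of characteristic not 2, b a regular symmetric bilinear form on a finite-dimensional K-vector space V, and u ∈ GL(V) a b-isometry with u − id nilpotent. Then for every natural number k, the rank of (u − id)^{2k+1} is even. -/

import Mathlib

/-!
The Cayley transform `c = (u - 1)(u + 1)⁻¹` of the isometry `u` is skew-adjoint for `b`, hence so
is every odd power `c ^ (2k+1)`, and it has the same range as `(u - 1) ^ (2k+1)` because `u - 1`
commutes with the invertible `u + 1`. For a skew-adjoint `f`, the form `b (f x) y` is
antisymmetric with radical `ker f`, so it restricts to a nondegenerate antisymmetric form on a
complement of `ker f`, of dimension `rank f`; its Gram matrix `A` satisfies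
`det A = det Aᵀ = (-1) ^ rank f * det A ≠ 0`, so `rank f` is even.
-/

open Module

theorem isUnit_add_one_of_isNilpotent_sub_one {R : Type*} [Ring R] {u : R}
    (h2 : IsUnit (2 : R)) (hu : IsNilpotent (u - 1)) : IsUnit (u + 1) := by
  have := hu.isUnit_add_right_of_commute h2 (Commute.ofNat_right _ 2)
  rwa [sub_add_eq_add_sub, ← one_add_one_eq_two, ← add_assoc, add_sub_cancel_right] at this

noncomputable def cayley {R : Type*} [Ring R] (a : R) : R :=
  (a - 1) * Ring.inverse (a + 1)

namespace LinearMap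

variable {R M : Type*} [CommRing R] [AddCommGroup M] [Module R M]

theorem IsAdjointPair.pow {B : M →ₗ[R] M →ₗ[R] R} {f g : Module.End R M}
    (h : IsAdjointPair B B f g) (n : ℕ) : IsAdjointPair B B ⇑(f ^ n) ⇑(g ^ n) := by
  induction n with
  | zero => exact isAdjointPair_one
  | succ n ih => rw [pow_succ f, pow_succ' g]; exact ih.mul h

theorem IsSkewAdjoint.pow_of_odd {B : M →ₗ[R] M →ₗ[R] R} {f : Module.End R M}
    (hf : B.IsSkewAdjoint f) {n : ℕ} (hn : Odd n) : B.IsSkewAdjoint ⇑(f ^ n) := by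
  have := IsAdjointPair.pow (g := -f) hf n
  rwa [hn.neg_pow] at this

theorem isSkewAdjoint_cayley {B : LinearMap.BilinForm R M} {u : Module.End R M}
    (hu : B.IsOrthogonal u) (h : IsUnit (u + 1)) : B.IsSkewAdjoint ⇑(cayley u) := by
  intro x y
  obtain ⟨a, rfl⟩ : ∃ a, (u + 1) a = x := ⟨_, congr($(Ring.mul_inverse_cancel _ h) x)⟩
  obtain ⟨b, rfl⟩ : ∃ b, (u + 1) b = y := ⟨_, congr($(Ring.mul_inverse_cancel _ h) y)⟩
  have hinv : ∀ z, Ring.inverse (u + 1) ((u + 1) z) = z := fun z =>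
    congr($(Ring.inverse_mul_cancel _ h) z)
  simp only [cayley, Pi.neg_apply, Module.End.mul_apply, hinv]
  simp only [add_apply, sub_apply, Module.End.one_apply, map_add, map_sub, map_neg]
  linear_combination 2 * hu a b

theorem range_cayley_pow {u : Module.End R M} (h : IsUnit (u + 1)) (n : ℕ) :
    range (cayley u ^ n) = range ((u - 1) ^ n) := by
  have hcomm : Commute (u - 1) (Ring.inverse (u + 1)) := by
    obtain ⟨w, hw⟩ := h
    rw [← hw, Ring.inverse_unit]
    refine Commute.units_inv_right ?_
    rw [hw]
    exact ((Commute.refl u).add_right (Commute.one_right u)).sub_left (Commute.one_left _)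
  rw [cayley, hcomm.mul_pow, Module.End.mul_eq_comp]
  exact range_comp_of_range_eq_top _
    (range_eq_top.2 ((Module.End.isUnit_iff _).1 (h.ringInverse.pow n)).2)

end LinearMap

namespace LinearMap.BilinForm

variable {K V : Type*} [Field K] [AddCommGroup V] [Module K V] [FiniteDimensional K V]

theorem even_finrank_of_nondegenerate_of_antisymm (hchar : (2 : K) ≠ 0)
    {S : LinearMap.BilinForm K V} (hS : S.Nondegenerate) (hanti : ∀ x y, S x y = -S y x) :
    Even (finrank K V) := by
  let b := Module.finBasis K V
  set A := toMatrix b S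
  have hAt : A.transpose = -A := by
    ext i j
    simp [A, toMatrix_apply, hanti (b j) (b i)]
  have hdet : A.det ≠ 0 := (nondegenerate_iff_det_ne_zero b).1 hS
  have hsign : (-1 : K) ^ finrank K V = 1 := by
    refine mul_right_cancel₀ hdet ?_
    have := Matrix.det_neg A
    rw [← hAt, Matrix.det_transpose, Fintype.card_fin] at this
    rw [one_mul, ← this]
  refine (neg_one_pow_eq_one_iff_even fun h => hchar ?_).1 hsign
  linear_combination -h

theorem even_finrank_range_of_isSkewAdjoint (hchar : (2 : K) ≠ 0)
    {B : LinearMap.BilinForm K V} (hB : B.IsSymm) (hnd : B.Nondegenerate)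
    {f : Module.End K V} (hf : B.IsSkewAdjoint f) : Even (finrank K (range f)) := by
  obtain ⟨W, hW⟩ := (ker f).exists_isCompl
  set S : LinearMap.BilinForm K V := B ∘ₗ f
  have hanti : ∀ x y, S x y = -S y x := fun x y => by
    change B (f x) y = -B (f y) x
    rw [hf x y, Pi.neg_apply, map_neg, hB.eq x]
  have hS : (S.restrict W).Nondegenerate := by
    refine S.nondegenerate_restrict_of_disjoint_orthogonal
      (fun x y h => by rw [hanti, h, neg_zero]) (Submodule.disjoint_def.2 fun v hvW hv => ?_)
    have hker : ∀ k ∈ ker f, S k v = 0 := fun k hk => by simp [S, mem_ker.1 hk]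
    have hfv : f v = 0 := hnd.1 _ fun y => by
      obtain ⟨k, hk, w, hw, rfl⟩ :=
        Submodule.mem_sup.1 (hW.sup_eq_top ▸ Submodule.mem_top (x := y))
      change S v (k + w) = 0
      rw [map_add, hanti, hanti v w, hker k hk, hv w hw, neg_zero, add_zero]
    exact Submodule.disjoint_def.1 hW.disjoint v hfv hvW
  have hrank : finrank K W = finrank K (range f) := by
    have := f.finrank_range_add_finrank_ker
    have := Submodule.finrank_add_eq_of_isCompl hW
    omega
  exact hrank ▸ even_finrank_of_nondegenerate_of_antisymm hchar hS fun x y => hanti x y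

end LinearMap.BilinForm

theorem odd_rank_even_of_symmetric_unipotent {K V : Type*} [Field K]
    [AddCommGroup V] [Module K V] [FiniteDimensional K V]
    (hchar : (2 : K) ≠ 0)
    (B : V →ₗ[K] V →ₗ[K] K)
    (hsymm : ∀ x y, B x y = B y x)
    (hreg : B.Nondegenerate)
    (u : V ≃ₗ[K] V)
    (hiso : ∀ x y, B (u x) (u y) = B x y)
    (hnil : IsNilpotent ((u : V →ₗ[K] V) - LinearMap.id)) :
    ∀ k : ℕ, Even (Module.finrank K
      (LinearMap.range (((u : V →ₗ[K] V) - LinearMap.id) ^ (2 * k + 1)))) := by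
  intro k
  rw [← Module.End.one_eq_id] at hnil ⊢
  have htwo : IsUnit (2 : Module.End K V) := by
    have := (isUnit_iff_ne_zero.2 hchar).map (algebraMap K (Module.End K V))
    rwa [map_ofNat] at this
  have hunit := isUnit_add_one_of_isNilpotent_sub_one htwo hnil
  rw [← LinearMap.range_cayley_pow hunit]
  exact LinearMap.BilinForm.even_finrank_range_of_isSkewAdjoint hchar ⟨hsymm⟩ hreg
    ((LinearMap.isSkewAdjoint_cayley hiso hunit).pow_of_odd (odd_two_mul_add_one k))
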